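/- arXiv:1805.09112 — 3 statements merged into one kernel-verified Lean document; each statement's English description precedes it below -/
import Mathlib

section
/- For fixed distinct x, y ∈ ℝ^n, the distance d_c(x,y) = (2/√c) tanh⁻¹(√c ‖(−x) ⊕_c y‖) converges to 2‖x − y‖ as c → 0⁺. -/
noncomputable section
open Real
open scoped RealInnerProductSpace
attribute [local instance] Classical.propDecidable

/-- Inverse hyperbolic tangent. -/
def artanh (x : ℝ) : ℝ := (1 / 2) * Real.log ((1 + x) / (1 - x))

/-- Inverse hyperbolic cosine. -/
def arcosh (x : ℝ) : ℝ := Real.log (x + Real.sqrt (x ^ 2 - 1))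

/-- Möbius addition on the ball `D_c^n`. -/
def mAdd {n : ℕ} (c : ℝ) (x y : EuclideanSpace ℝ (Fin n)) : EuclideanSpace ℝ (Fin n) :=
  (1 / (1 + 2 * c * ⟪x, y⟫ + c ^ 2 * ‖x‖ ^ 2 * ‖y‖ ^ 2)) •
    ((1 + 2 * c * ⟪x, y⟫ + c * ‖y‖ ^ 2) • x + (1 - c * ‖x‖ ^ 2) • y)

/-- Möbius scalar multiplication. -/
def mSmul {n : ℕ} (c r : ℝ) (x : EuclideanSpace ℝ (Fin n)) : EuclideanSpace ℝ (Fin n) :=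
  if x = 0 then 0 else
    ((1 / Real.sqrt c) * Real.tanh (r * _root_.artanh (Real.sqrt c * ‖x‖)) * ‖x‖⁻¹) • x

/-- Induced gyrovector distance. -/
def mDist {n : ℕ} (c : ℝ) (x y : EuclideanSpace ℝ (Fin n)) : ℝ :=
  (2 / Real.sqrt c) * _root_.artanh (Real.sqrt c * ‖mAdd c (-x) y‖)

/-- Conformal factor. -/
def lam {n : ℕ} (c : ℝ) (x : EuclideanSpace ℝ (Fin n)) : ℝ := 2 / (1 - c * ‖x‖ ^ 2)

/-- Exponential map at `x`. -/
def expMap {n : ℕ} (c : ℝ) (x v : EuclideanSpace ℝ (Fin n)) : EuclideanSpace ℝ (Fin n) :=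
  if v = 0 then x else
    mAdd c x ((Real.tanh (Real.sqrt c * lam c x * ‖v‖ / 2) / (Real.sqrt c * ‖v‖)) • v)

/-- Logarithmic map at `x`. -/
def logMap {n : ℕ} (c : ℝ) (x y : EuclideanSpace ℝ (Fin n)) : EuclideanSpace ℝ (Fin n) :=
  if mAdd c (-x) y = 0 then 0 else
    ((2 / (Real.sqrt c * lam c x)) * _root_.artanh (Real.sqrt c * ‖mAdd c (-x) y‖) *
      ‖mAdd c (-x) y‖⁻¹) • mAdd c (-x) y

/-- Exponential map at the origin. -/
def expZero {n : ℕ} (c : ℝ) (v : EuclideanSpace ℝ (Fin n)) : EuclideanSpace ℝ (Fin n) :=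
  if v = 0 then 0 else (Real.tanh (Real.sqrt c * ‖v‖) / (Real.sqrt c * ‖v‖)) • v

/-- Logarithmic map at the origin. -/
def logZero {n : ℕ} (c : ℝ) (y : EuclideanSpace ℝ (Fin n)) : EuclideanSpace ℝ (Fin n) :=
  if y = 0 then 0 else (_root_.artanh (Real.sqrt c * ‖y‖) / (Real.sqrt c * ‖y‖)) • y

/-- Möbius version of a linear map. -/
def mMap {n m : ℕ} (c : ℝ) (M : EuclideanSpace ℝ (Fin n) →ₗ[ℝ] EuclideanSpace ℝ (Fin m))
    (x : EuclideanSpace ℝ (Fin n)) : EuclideanSpace ℝ (Fin m) :=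
  if M x = 0 then 0 else
    ((1 / Real.sqrt c) * Real.tanh ((‖M x‖ / ‖x‖) * _root_.artanh (Real.sqrt c * ‖x‖)) *
      ‖M x‖⁻¹) • M x

/-! As `c → 0⁺`, Möbius addition degenerates continuously to vector addition, so
`‖(-x) ⊕_c y‖ → ‖x - y‖`. Writing `artanh s = s · dslope artanh 0 s`, the distance becomes
`2 ‖(-x) ⊕_c y‖ · dslope artanh 0 (√c ‖(-x) ⊕_c y‖)`, and the slope factor tends to
`artanh' 0 = 1`. -/

open Filter Topology

theorem hasDerivAt_artanh {x : ℝ} (hx₁ : x ≠ 1) (hx₂ : x ≠ -1) :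
    HasDerivAt _root_.artanh (1 / (1 - x ^ 2)) x := by
  have hp : 1 + x ≠ 0 := fun h => hx₂ (by linarith)
  have hm : 1 - x ≠ 0 := sub_ne_zero.mpr (Ne.symm hx₁)
  have hquot : HasDerivAt (fun t : ℝ => (1 + t) / (1 - t))
      ((1 * (1 - x) - (1 + x) * (-1)) / (1 - x) ^ 2) x :=
    ((hasDerivAt_id x).const_add 1).div ((hasDerivAt_id x).const_sub 1) hm
  have hsq : 1 - x ^ 2 ≠ 0 := by
    rw [show 1 - x ^ 2 = (1 + x) * (1 - x) by ring]
    exact mul_ne_zero hp hm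
  refine ((hquot.log (div_ne_zero hp hm)).const_mul (1 / 2 : ℝ)).congr_deriv ?_
  field_simp
  ring

theorem tendsto_dslope_artanh_zero :
    Tendsto (dslope _root_.artanh 0) (𝓝 0) (𝓝 1) := by
  have hderiv : HasDerivAt _root_.artanh 1 0 := by
    simpa using hasDerivAt_artanh (x := 0) (by norm_num) (by norm_num)
  have hcont := continuousAt_dslope_same.mpr hderiv.differentiableAt
  simpa [ContinuousAt, dslope_same, hderiv.deriv] using hcont

theorem tendsto_two_div_sqrt_mul_artanh {u : ℝ → ℝ} {L : ℝ}
    (hu : Tendsto u (𝓝[>] 0) (𝓝 L)) :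
    Tendsto (fun c => 2 / √c * _root_.artanh (√c * u c)) (𝓝[>] 0) (𝓝 (2 * L)) := by
  have hsqrt : Tendsto (fun c : ℝ => √c) (𝓝[>] 0) (𝓝 0) := by
    simpa using (Real.continuous_sqrt.tendsto 0).mono_left nhdsWithin_le_nhds
  have harg : Tendsto (fun c => √c * u c) (𝓝[>] 0) (𝓝 0) := by
    simpa using hsqrt.mul hu
  have hlim : Tendsto (fun c => 2 * u c * dslope _root_.artanh 0 (√c * u c)) (𝓝[>] 0)
      (𝓝 (2 * L * 1)) :=
    (hu.const_mul 2).mul (tendsto_dslope_artanh_zero.comp harg)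
  rw [mul_one] at hlim
  refine hlim.congr' ?_
  filter_upwards [self_mem_nhdsWithin] with c (hc : 0 < c)
  -- `artanh t = t • dslope artanh 0 t` holds for every `t`, including `t = 0`.
  have hslope := sub_smul_dslope _root_.artanh 0 (√c * u c)
  have hzero : _root_.artanh 0 = 0 := by simp [_root_.artanh]
  rw [sub_zero, hzero, sub_zero, smul_eq_mul] at hslope
  rw [← hslope]
  field_simp [(Real.sqrt_pos.mpr hc).ne']

theorem mAdd_curvature_zero {n : ℕ} (x y : EuclideanSpace ℝ (Fin n)) :
    mAdd 0 x y = x + y := by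
  simp [mAdd]

theorem continuousAt_mAdd_curvature_zero {n : ℕ} (x y : EuclideanSpace ℝ (Fin n)) :
    ContinuousAt (fun c : ℝ => mAdd c x y) 0 := by
  have hden : ContinuousAt (fun c : ℝ => 1 + 2 * c * ⟪x, y⟫ + c ^ 2 * ‖x‖ ^ 2 * ‖y‖ ^ 2) 0 := by
    fun_prop
  have hnum : ContinuousAt
      (fun c : ℝ => (1 + 2 * c * ⟪x, y⟫ + c * ‖y‖ ^ 2) • x + (1 - c * ‖x‖ ^ 2) • y) 0 := by
    fun_prop
  exact (continuousAt_const.div hden (by norm_num)).smul hnum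

theorem mDist_tendsto_general {n : ℕ} (x y : EuclideanSpace ℝ (Fin n)) :
    Filter.Tendsto (fun c : ℝ => mDist c x y) (nhdsWithin 0 (Set.Ioi 0))
      (nhds (2 * ‖x - y‖)) := by
  have hnorm : Tendsto (fun c : ℝ => ‖mAdd c (-x) y‖) (𝓝[>] 0) (𝓝 ‖x - y‖) := by
    have h := (continuousAt_mAdd_curvature_zero (-x) y).norm.tendsto.mono_left
      (nhdsWithin_le_nhds (s := Set.Ioi 0))
    rwa [mAdd_curvature_zero, neg_add_eq_sub, norm_sub_rev] at h
  exact tendsto_two_div_sqrt_mul_artanh hnorm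

theorem mDist_tendsto {n : ℕ} (x y : EuclideanSpace ℝ (Fin n)) (hxy : x ≠ y) :
    Filter.Tendsto (fun c : ℝ => mDist c x y) (nhdsWithin 0 (Set.Ioi 0))
      (nhds (2 * ‖x - y‖)) :=
  mDist_tendsto_general x y
end
end

section
/- For c > 0, p ∈ D_c^n and a ∈ ℝ^n \ {0}, the Poincaré hyperplane satisfies: exp_p^c({z ∈ ℝ^n : ⟨z, a⟩ = 0}) = {x ∈ D_c^n : ⟨(−p) ⊕_c x, a⟩ = 0}. -/
noncomputable section
open Real
open scoped RealInnerProductSpace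
attribute [local instance] Classical.propDecidable

/-! The identity `(-x) ⊕_c (x ⊕_c y) = y` on the ball makes `y ↦ p ⊕_c y` a bijection of the ball
with inverse `x ↦ (-p) ⊕_c x`. Since `exp_p^c v = p ⊕_c u(v)` with
`u(v) = tanh (√c λ_p^c ‖v‖ / 2) v / (√c ‖v‖)`, it remains to see that `u` maps the hyperplane `a⊥`
onto its trace on the ball. But `u(v)` is a nonnegative multiple of `v` of norm
`tanh (√c λ_p^c ‖v‖ / 2) / √c`, so `u` maps every ray from `0` onto the corresponding radius of the
ball, as `tanh` maps `[0, ∞)` onto `[0, 1)`. -/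

section Mobius

variable {n : ℕ} {c : ℝ}

lemma mAdd_zero_right (c : ℝ) (x : EuclideanSpace ℝ (Fin n)) : mAdd c x 0 = x := by
  simp [mAdd]

lemma mAdd_eq_smul_add_smul (c : ℝ) (x y : EuclideanSpace ℝ (Fin n)) :
    mAdd c x y = ((1 + 2 * c * ⟪x, y⟫ + c * ‖y‖ ^ 2) /
        (1 + 2 * c * ⟪x, y⟫ + c ^ 2 * ‖x‖ ^ 2 * ‖y‖ ^ 2)) • x +
      ((1 - c * ‖x‖ ^ 2) / (1 + 2 * c * ⟪x, y⟫ + c ^ 2 * ‖x‖ ^ 2 * ‖y‖ ^ 2)) • y := by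
  rw [mAdd]; module

lemma norm_smul_add_smul_sq (A B : ℝ) (x y : EuclideanSpace ℝ (Fin n)) :
    ‖A • x + B • y‖ ^ 2 = A ^ 2 * ‖x‖ ^ 2 + 2 * A * B * ⟪x, y⟫ + B ^ 2 * ‖y‖ ^ 2 := by
  simp only [← real_inner_self_eq_norm_sq, inner_add_left, inner_add_right,
    real_inner_smul_left, real_inner_smul_right, real_inner_comm y x]
  ring

/-- The denominator is at least `(1 - c ‖x‖ ‖y‖)²` by Cauchy–Schwarz. -/
lemma mAdd_denom_pos (hc : 0 ≤ c) {x y : EuclideanSpace ℝ (Fin n)}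
    (hx : c * ‖x‖ ^ 2 < 1) (hy : c * ‖y‖ ^ 2 < 1) :
    0 < 1 + 2 * c * ⟪x, y⟫ + c ^ 2 * ‖x‖ ^ 2 * ‖y‖ ^ 2 := by
  have hcs : -(‖x‖ * ‖y‖) ≤ ⟪x, y⟫ := (abs_le.mp (abs_real_inner_le_norm x y)).1
  have hxy : c * (‖x‖ * ‖y‖) < 1 := by
    have : (c * (‖x‖ * ‖y‖)) ^ 2 < 1 := by
      rw [show (c * (‖x‖ * ‖y‖)) ^ 2 = (c * ‖x‖ ^ 2) * (c * ‖y‖ ^ 2) by ring]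
      exact mul_lt_one_of_nonneg_of_lt_one_left (by positivity) hx hy.le
    exact (abs_lt.mp ((sq_lt_one_iff_abs_lt_one _).mp this)).2
  nlinarith [mul_le_mul_of_nonneg_left hcs hc, sq_nonneg (1 - c * (‖x‖ * ‖y‖))]

lemma one_sub_mul_norm_mAdd_sq (hc : 0 ≤ c) {x y : EuclideanSpace ℝ (Fin n)}
    (hx : c * ‖x‖ ^ 2 < 1) (hy : c * ‖y‖ ^ 2 < 1) :
    1 - c * ‖mAdd c x y‖ ^ 2 =
      (1 - c * ‖x‖ ^ 2) * (1 - c * ‖y‖ ^ 2) / (1 + 2 * c * ⟪x, y⟫ + c ^ 2 * ‖x‖ ^ 2 * ‖y‖ ^ 2) := by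
  have hD := (mAdd_denom_pos hc hx hy).ne'
  rw [mAdd_eq_smul_add_smul, norm_smul_add_smul_sq]
  generalize hD_def : 1 + 2 * c * ⟪x, y⟫ + c ^ 2 * ‖x‖ ^ 2 * ‖y‖ ^ 2 = D at hD ⊢
  field_simp
  rw [← hD_def]
  ring

lemma mAdd_mem_ball (hc : 0 ≤ c) {x y : EuclideanSpace ℝ (Fin n)}
    (hx : c * ‖x‖ ^ 2 < 1) (hy : c * ‖y‖ ^ 2 < 1) : c * ‖mAdd c x y‖ ^ 2 < 1 := by
  have h : 0 < 1 - c * ‖mAdd c x y‖ ^ 2 := by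
    rw [one_sub_mul_norm_mAdd_sq hc hx hy]
    exact div_pos (mul_pos (by linarith) (by linarith)) (mAdd_denom_pos hc hx hy)
  linarith

lemma neg_mAdd_cancel_left (hc : 0 ≤ c) {x y : EuclideanSpace ℝ (Fin n)}
    (hx : c * ‖x‖ ^ 2 < 1) (hy : c * ‖y‖ ^ 2 < 1) : mAdd c (-x) (mAdd c x y) = y := by
  have hD := (mAdd_denom_pos hc hx hy).ne'
  have hx' : 1 - c * ‖x‖ ^ 2 ≠ 0 := by linarith
  set D := 1 + 2 * c * ⟪x, y⟫ + c ^ 2 * ‖x‖ ^ 2 * ‖y‖ ^ 2 with hD_def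
  set A := (1 + 2 * c * ⟪x, y⟫ + c * ‖y‖ ^ 2) / D with hA
  set B := (1 - c * ‖x‖ ^ 2) / D with hB
  have hu : mAdd c x y = A • x + B • y := mAdd_eq_smul_add_smul c x y
  clear_value A B D
  have hinner : ⟪x, mAdd c x y⟫ = A * ‖x‖ ^ 2 + B * ⟪x, y⟫ := by
    rw [hu, inner_add_right, real_inner_smul_right, real_inner_smul_right,
      real_inner_self_eq_norm_sq]
  have hnorm : ‖mAdd c x y‖ ^ 2 = A ^ 2 * ‖x‖ ^ 2 + 2 * A * B * ⟪x, y⟫ + B ^ 2 * ‖y‖ ^ 2 := by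
    rw [hu, norm_smul_add_smul_sq]
  have hcoef : 1 + 2 * c * ⟪-x, mAdd c x y⟫ + c * ‖mAdd c x y‖ ^ 2 = (1 - c * ‖x‖ ^ 2) * A := by
    rw [inner_neg_left, hinner, hnorm, hA, hB]
    field_simp
    rw [hD_def]
    ring
  have hdenom : 1 + 2 * c * ⟪-x, mAdd c x y⟫ + c ^ 2 * ‖-x‖ ^ 2 * ‖mAdd c x y‖ ^ 2 =
      (1 - c * ‖x‖ ^ 2) * B := by
    rw [inner_neg_left, norm_neg, hinner, hnorm, hA, hB]
    field_simp
    rw [hD_def]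
    ring
  have hB0 : B ≠ 0 := by rw [hB]; exact div_ne_zero hx' hD
  rw [mAdd, hcoef, hdenom, norm_neg, hu]
  match_scalars
  · ring
  · field_simp

end Mobius

section Exponential

variable {n : ℕ} {c : ℝ}

def tanhScale (c μ : ℝ) (v : EuclideanSpace ℝ (Fin n)) : EuclideanSpace ℝ (Fin n) :=
  (Real.tanh (Real.sqrt c * μ * ‖v‖ / 2) / (Real.sqrt c * ‖v‖)) • v

lemma expMap_eq_mAdd_tanhScale (c : ℝ) (p v : EuclideanSpace ℝ (Fin n)) :
    expMap c p v = mAdd c p (tanhScale c (lam c p) v) := by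
  rw [expMap, tanhScale]
  split_ifs with hv
  · rw [hv, smul_zero, mAdd_zero_right]
  · rfl

lemma mul_norm_tanhScale_sq (hc : 0 ≤ c) (μ : ℝ) (v : EuclideanSpace ℝ (Fin n)) :
    c * ‖tanhScale c μ v‖ ^ 2 = Real.tanh (Real.sqrt c * μ * ‖v‖ / 2) ^ 2 := by
  rw [tanhScale]
  rcases eq_or_ne (Real.sqrt c * ‖v‖) 0 with h | h
  · rcases mul_eq_zero.mp h with h | h
    · simp [h]
    · simp [norm_eq_zero.mp h]
  · obtain ⟨hsc, hv⟩ := mul_ne_zero_iff.mp h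
    have hc0 : c ≠ 0 := (Real.sqrt_ne_zero'.mp hsc).ne'
    rw [norm_smul, Real.norm_eq_abs, mul_pow, sq_abs, div_pow, mul_pow, Real.sq_sqrt hc]
    field_simp

lemma exists_tanhScale_smul_eq (hc : 0 < c) {μ : ℝ} (hμ : 0 < μ)
    {w : EuclideanSpace ℝ (Fin n)} (hw : c * ‖w‖ ^ 2 < 1) :
    ∃ t : ℝ, tanhScale c μ (t • w) = w := by
  rcases eq_or_ne w 0 with rfl | hw0
  · exact ⟨0, by simp [tanhScale]⟩
  have hsc : 0 < Real.sqrt c := Real.sqrt_pos.mpr hc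
  have hwn : 0 < ‖w‖ := norm_pos_iff.mpr hw0
  have hr : Real.sqrt c * ‖w‖ ∈ Set.Ioo 0 1 := by
    refine ⟨by positivity, ?_⟩
    rw [← abs_of_pos (by positivity : 0 < Real.sqrt c * ‖w‖), ← sq_lt_one_iff_abs_lt_one,
      mul_pow, Real.sq_sqrt hc.le]
    exact hw
  have hart := Real.artanh_pos hr
  set t := 2 * Real.artanh (Real.sqrt c * ‖w‖) / (Real.sqrt c * μ * ‖w‖) with ht
  have ht0 : 0 < t := by positivity
  have harg : Real.sqrt c * μ * ‖t • w‖ / 2 = Real.artanh (Real.sqrt c * ‖w‖) := by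
    rw [norm_smul, Real.norm_of_nonneg ht0.le, ht]
    field_simp
  refine ⟨t, ?_⟩
  rw [tanhScale, harg, Real.tanh_artanh (Set.Ioo_subset_Ioo_left (by norm_num) hr), norm_smul,
    Real.norm_of_nonneg ht0.le, smul_smul]
  convert one_smul ℝ w using 2
  field_simp

end Exponential

theorem poincare_hyperplane_eq_general {n : ℕ} (c : ℝ) (hc : 0 < c)
    (p : EuclideanSpace ℝ (Fin n)) (hp : c * ‖p‖ ^ 2 < 1)
    (a : EuclideanSpace ℝ (Fin n)) :
    expMap c p '' {z : EuclideanSpace ℝ (Fin n) | ⟪z, a⟫ = 0} =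
      {x : EuclideanSpace ℝ (Fin n) | c * ‖x‖ ^ 2 < 1 ∧ ⟪mAdd c (-p) x, a⟫ = 0} := by
  have hp' : c * ‖-p‖ ^ 2 < 1 := by rwa [norm_neg]
  ext x
  constructor
  · rintro ⟨v, hv, rfl⟩
    rw [expMap_eq_mAdd_tanhScale]
    have hu := (mul_norm_tanhScale_sq hc.le (lam c p) v).trans_lt (Real.tanh_sq_lt_one _)
    refine ⟨mAdd_mem_ball hc.le hp hu, ?_⟩
    rw [neg_mAdd_cancel_left hc.le hp hu, tanhScale, real_inner_smul_left, hv, mul_zero]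
  · rintro ⟨hx, hxa⟩
    have hlam : 0 < lam c p := div_pos two_pos (by linarith)
    obtain ⟨t, ht⟩ := exists_tanhScale_smul_eq hc hlam (mAdd_mem_ball hc.le hp' hx)
    refine ⟨t • mAdd c (-p) x, by rw [Set.mem_ofPred_eq, real_inner_smul_left, hxa, mul_zero], ?_⟩
    rw [expMap_eq_mAdd_tanhScale, ht]
    simpa using neg_mAdd_cancel_left hc.le hp' hx

theorem poincare_hyperplane_eq {n : ℕ} (c : ℝ) (hc : 0 < c)
    (p : EuclideanSpace ℝ (Fin n)) (hp : c * ‖p‖ ^ 2 < 1)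
    (a : EuclideanSpace ℝ (Fin n)) (ha : a ≠ 0) :
    expMap c p '' {z : EuclideanSpace ℝ (Fin n) | ⟪z, a⟫ = 0} =
      {x : EuclideanSpace ℝ (Fin n) | c * ‖x‖ ^ 2 < 1 ∧ ⟪mAdd c (-p) x, a⟫ = 0} :=
  poincare_hyperplane_eq_general c hc p hp a
end
end

section
/- For c > 0 and linear maps M' : ℝ^n → ℝ^m, M : ℝ^m → ℝ^l, the Möbius matrix-vector multiplication satisfies matrix associativity: (M M') ⊗_c x = M ⊗_c (M' ⊗_c x) for all x ∈ D_c^n. -/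
noncomputable section
open Real
open scoped RealInnerProductSpace
attribute [local instance] Classical.propDecidable

/-!
Möbius linear maps factor through the tangent space at the origin: `M ⊗_c x = exp₀ (M (log₀ x))`,
with `exp₀`, `log₀` the exponential and logarithmic maps of the Poincaré ball at `0`. Since
`artanh ∘ tanh = id`, we have `log₀ ∘ exp₀ = id`, so in `M ⊗_c (M' ⊗_c x)` the middle
`log₀ ∘ exp₀` cancels and leaves `exp₀ (M M' (log₀ x))`.
-/

lemma artanh_tanh_eq (t : ℝ) : _root_.artanh (tanh t) = t := by
  have hmem : tanh t ∈ Set.Icc (-1) 1 := ⟨(neg_one_lt_tanh t).le, (tanh_lt_one t).le⟩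
  rw [_root_.artanh, ← Real.artanh_eq_half_log hmem, Real.artanh_tanh]

lemma tanh_pos_of_pos {t : ℝ} (ht : 0 < t) : 0 < tanh t := by
  rw [tanh_eq_sinh_div_cosh]
  exact div_pos (sinh_pos_iff.mpr ht) (cosh_pos t)

section
variable {n : ℕ} (c : ℝ)

lemma logZero_eq_smul (y : EuclideanSpace ℝ (Fin n)) :
    logZero c y = (_root_.artanh (√c * ‖y‖) / (√c * ‖y‖)) • y := by
  unfold logZero
  split_ifs with hy
  · simp [hy]
  · rfl

lemma mMap_eq_smul {m : ℕ} (M : EuclideanSpace ℝ (Fin n) →ₗ[ℝ] EuclideanSpace ℝ (Fin m))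
    (x : EuclideanSpace ℝ (Fin n)) :
    mMap c M x = ((1 / √c) * tanh ((‖M x‖ / ‖x‖) * _root_.artanh (√c * ‖x‖)) * ‖M x‖⁻¹) • M x := by
  unfold mMap
  split_ifs with hMx
  · simp [hMx]
  · rfl

lemma tanh_mul_abs_div_abs (k s : ℝ) : tanh (|k| * s) / |k| = tanh (k * s) / k := by
  rcases abs_choice k with h | h <;> simp [h, neg_mul, tanh_neg, neg_div_neg_eq]

lemma expZero_smul (k : ℝ) (w : EuclideanSpace ℝ (Fin n)) :
    expZero c (k • w) = (tanh (√c * k * ‖w‖) / (√c * ‖w‖)) • w := by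
  unfold expZero
  split_ifs with hkw
  · rcases smul_eq_zero.mp hkw with rfl | rfl <;> simp
  · have hk : k ≠ 0 := left_ne_zero_of_smul hkw
    rw [smul_smul, norm_smul, Real.norm_eq_abs]
    congr 1
    calc tanh (√c * (|k| * ‖w‖)) / (√c * (|k| * ‖w‖)) * k
        = tanh (|k| * (√c * ‖w‖)) / |k| * k / (√c * ‖w‖) := by ring_nf
      _ = tanh (k * (√c * ‖w‖)) / (√c * ‖w‖) := by
        rw [tanh_mul_abs_div_abs, div_mul_cancel₀ _ hk]
      _ = tanh (√c * k * ‖w‖) / (√c * ‖w‖) := by ring_nf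

lemma logZero_expZero (hc : 0 < c) (v : EuclideanSpace ℝ (Fin n)) :
    logZero c (expZero c v) = v := by
  by_cases hv : v = 0
  · simp [hv, expZero, logZero]
  have hs : 0 < √c * ‖v‖ := mul_pos (sqrt_pos.mpr hc) (norm_pos_iff.mpr hv)
  have ht := tanh_pos_of_pos hs
  have hnorm : √c * ‖expZero c v‖ = tanh (√c * ‖v‖) := by
    rw [expZero, if_neg hv, norm_smul, Real.norm_eq_abs, abs_of_pos (div_pos ht hs)]
    field_simp
  have hcoeff : √c * ‖v‖ / tanh (√c * ‖v‖) * (tanh (√c * ‖v‖) / (√c * ‖v‖)) = 1 := by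
    field_simp
  rw [logZero_eq_smul, hnorm, artanh_tanh_eq, expZero, if_neg hv, smul_smul, hcoeff, one_smul]

lemma mMap_eq_expZero_map_logZero (hc : 0 < c) {m : ℕ}
    (M : EuclideanSpace ℝ (Fin n) →ₗ[ℝ] EuclideanSpace ℝ (Fin m)) (x : EuclideanSpace ℝ (Fin n)) :
    mMap c M x = expZero c (M (logZero c x)) := by
  have hsc : √c ≠ 0 := (sqrt_pos.mpr hc).ne'
  rw [mMap_eq_smul, logZero_eq_smul, map_smul, expZero_smul,
    show √c * (_root_.artanh (√c * ‖x‖) / (√c * ‖x‖)) * ‖M x‖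
      = ‖M x‖ / ‖x‖ * _root_.artanh (√c * ‖x‖) by field_simp]
  congr 1
  ring

end

theorem mMap_comp_general {n m l : ℕ} (c : ℝ) (hc : 0 < c)
    (M' : EuclideanSpace ℝ (Fin n) →ₗ[ℝ] EuclideanSpace ℝ (Fin m))
    (M : EuclideanSpace ℝ (Fin m) →ₗ[ℝ] EuclideanSpace ℝ (Fin l))
    (x : EuclideanSpace ℝ (Fin n)) :
    mMap c (M.comp M') x = mMap c M (mMap c M' x) := by
  rw [mMap_eq_expZero_map_logZero c hc, mMap_eq_expZero_map_logZero c hc,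
    mMap_eq_expZero_map_logZero c hc, logZero_expZero c hc, LinearMap.comp_apply]

theorem mMap_comp {n m l : ℕ} (c : ℝ) (hc : 0 < c)
    (M' : EuclideanSpace ℝ (Fin n) →ₗ[ℝ] EuclideanSpace ℝ (Fin m))
    (M : EuclideanSpace ℝ (Fin m) →ₗ[ℝ] EuclideanSpace ℝ (Fin l))
    (x : EuclideanSpace ℝ (Fin n)) (hx : c * ‖x‖ ^ 2 < 1) :
    mMap c (M.comp M') x = mMap c M (mMap c M' x) :=
  mMap_comp_general c hc M' M x
end
end
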